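/- With B satisfying (H1)-(H2)-(H3), α_0 ∈ P(B_{R_0}), K = K_{R_T}, M = M_{R_T}, and λ := 5M/2 + K, the map Φ_{α_0} defined on E_T = C([0,T], (P(B_{R_T}), W_2)) by Φ_{α_0}(α)_t := (X_t^α)_# α_0, where X_t^α is the flow of the vector field (t,x) ↦ B[α_t](x), is ½-Lipschitz for the distance dist(α¹,α²) = sup_t e^{−λt} W_2(α¹_t, α²_t); in particular it is a contraction and admits a unique fixed point. -/

import Mathlib

open MeasureTheory Real Set Filter Metric
open scoped ENNReal NNReal

noncomputable section

/-- `ℝ^d` with the Euclidean norm. -/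
abbrev Rd (d : ℕ) := EuclideanSpace ℝ (Fin d)

/-- `γ` is a transport plan (coupling) between `α` and `β`. -/
def IsCoupling {d : ℕ} (γ : Measure (Rd d × Rd d)) (α β : Measure (Rd d)) : Prop :=
  γ.map Prod.fst = α ∧ γ.map Prod.snd = β

/-- Squared 2-Wasserstein distance. -/
def W2sq {d : ℕ} (α β : Measure (Rd d)) : ℝ :=
  sInf {c | ∃ γ : Measure (Rd d × Rd d), IsCoupling γ α β ∧
    c = ∫ p, ‖p.1 - p.2‖ ^ 2 ∂γ}

/-- 2-Wasserstein distance. -/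
def W2 {d : ℕ} (α β : Measure (Rd d)) : ℝ := Real.sqrt (W2sq α β)

/-- `α` is supported in the closed ball of radius `R` centered at the origin. -/
def SuppIn {d : ℕ} (α : Measure (Rd d)) (R : ℝ) : Prop :=
  α (Metric.closedBall (0 : Rd d) R)ᶜ = 0

/-- Probability measure supported in the closed ball of radius `R`. -/
def ProbOn {d : ℕ} (α : Measure (Rd d)) (R : ℝ) : Prop :=
  IsProbabilityMeasure α ∧ SuppIn α R

/-- Compactly supported probability measure. -/
def IsCptProb {d : ℕ} (α : Measure (Rd d)) : Prop :=
  IsProbabilityMeasure α ∧ ∃ R : ℝ, SuppIn α R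

/-- Continuity of a curve of measures on `[0,T]` with respect to `W₂`. -/
def W2ContOn {d : ℕ} (α : ℝ → Measure (Rd d)) (T : ℝ) : Prop :=
  ∀ t ∈ Icc (0:ℝ) T, ∀ δ > (0:ℝ), ∃ η > (0:ℝ),
    ∀ s ∈ Icc (0:ℝ) T, |s - t| < η → W2 (α s) (α t) < δ

open Classical in
/-- Relative entropy `H(p|q)`, equal to `⊤` if `p` is not absolutely continuous w.r.t. `q`. -/
def relEntropy {d : ℕ} (p q : Measure (Rd d × Rd d)) : EReal :=
  if p ≪ q then ((∫ z, Real.log ((p.rnDeriv q z).toReal) ∂p : ℝ) : EReal) else ⊤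

/-- The entropic transport cost of a plan `γ` between `α` and `μ`:
`½∫|x−y|² dγ + ε H(γ | α⊗μ)`. -/
def entCost {d : ℕ} (ε : ℝ) (α μ : Measure (Rd d)) (γ : Measure (Rd d × Rd d)) : EReal :=
  (((∫ p, ‖p.1 - p.2‖ ^ 2 ∂γ) / 2 : ℝ) : EReal) + (ε : EReal) * relEntropy γ (α.prod μ)

/-- The entropic optimal transport value `OT_ε(α, μ)`. -/
def OTeps {d : ℕ} (ε : ℝ) (α μ : Measure (Rd d)) : EReal :=
  sInf {c | ∃ γ, IsCoupling γ α μ ∧ c = entCost ε α μ γ}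

/-- Hypothesis (H1): linear growth of `B[α]` uniformly in `α`. -/
def H1 {d : ℕ} (B : Measure (Rd d) → Rd d → Rd d) (C : ℝ) : Prop :=
  ∀ α : Measure (Rd d), IsCptProb α → ∀ x, ‖B α x‖ ≤ C * (1 + ‖x‖)

/-- `B[α]` is `K`-Lipschitz on the ball of radius `R`, for all `α ∈ P(B_R)`. -/
def LipOnBall {d : ℕ} (B : Measure (Rd d) → Rd d → Rd d) (R K : ℝ) : Prop :=
  ∀ α : Measure (Rd d), ProbOn α R →
    ∀ x ∈ Metric.closedBall (0 : Rd d) R, ∀ y ∈ Metric.closedBall (0 : Rd d) R,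
      ‖B α x - B α y‖ ≤ K * ‖x - y‖

/-- `α ↦ B[α]` is `M`-Lipschitz from `(P(B_R), W₂)` to `L^∞(B_R)`. -/
def W2LipOnBall {d : ℕ} (B : Measure (Rd d) → Rd d → Rd d) (R M : ℝ) : Prop :=
  ∀ α₁ α₂ : Measure (Rd d), ProbOn α₁ R → ProbOn α₂ R →
    ∀ x ∈ Metric.closedBall (0 : Rd d) R, ‖B α₁ x - B α₂ x‖ ≤ M * W2 α₁ α₂

/-- Hypothesis (H2). -/
def H2 {d : ℕ} (B : Measure (Rd d) → Rd d → Rd d) : Prop :=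
  ∀ R > (0:ℝ), ∃ K : ℝ, LipOnBall B R K

/-- Hypothesis (H3). -/
def H3 {d : ℕ} (B : Measure (Rd d) → Rd d → Rd d) : Prop :=
  ∀ R > (0:ℝ), ∃ M : ℝ, W2LipOnBall B R M

/-- Weak (distributional) solution of `∂ₜα + div(α B[α]) = 0`, `α(0,·) = α₀` on `[0,T]`,
with values in `P(B_R)`. -/
def IsWeakSolB {d : ℕ} (B : Measure (Rd d) → Rd d → Rd d) (α0 : Measure (Rd d))
    (T R : ℝ) (α : ℝ → Measure (Rd d)) : Prop :=
  α 0 = α0 ∧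
  (∀ t ∈ Icc (0:ℝ) T, ProbOn (α t) R) ∧
  W2ContOn α T ∧
  ∀ f : ℝ → Rd d → ℝ, ContDiff ℝ 1 (fun p : ℝ × Rd d => f p.1 p.2) →
    (∫ t in Icc (0:ℝ) T, ∫ x, (deriv (fun s => f s x) t
        + (inner ℝ (B (α t) x) (gradient (f t) x) : ℝ)) ∂(α t))
      = (∫ x, f T x ∂(α T)) - ∫ x, f 0 x ∂α0

/-- The transport part of the weak formulation of (entropic) semi-geostrophic equations,
with test functions `f ∈ C¹([0,T]×ℝ^d)` and curve of plans `γ`. -/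
def SGWeakForm {d : ℕ} (A : Rd d →L[ℝ] Rd d) (T : ℝ) (α0 : Measure (Rd d))
    (α : ℝ → Measure (Rd d)) (γ : ℝ → Measure (Rd d × Rd d)) : Prop :=
  ∀ f : ℝ → Rd d → ℝ, ContDiff ℝ 1 (fun p : ℝ × Rd d => f p.1 p.2) →
    ((∫ t in Icc (0:ℝ) T, ∫ x, (deriv (fun s => f s x) t
        + (inner ℝ (A x) (gradient (f t) x) : ℝ)) ∂(α t))
     - ∫ t in Icc (0:ℝ) T, ∫ p, (inner ℝ (A p.2) (gradient (f t) p.1) : ℝ) ∂(γ t))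
      = (∫ x, f T x ∂(α T)) - ∫ x, f 0 x ∂α0

/-- Weak solution of the entropic semi-geostrophic system with parameter `ε`:
the plans `γ_t` solve `OT_ε(α_t, μ₀)` for a.e. `t`. -/
def IsEntropicSGSol {d : ℕ} (A : Rd d →L[ℝ] Rd d) (ε T R0 : ℝ)
    (α0 μ0 : Measure (Rd d)) (α : ℝ → Measure (Rd d)) : Prop :=
  α 0 = α0 ∧
  (∀ t ∈ Icc (0:ℝ) T, ProbOn (α t) (2 * R0 * Real.exp (‖A‖ * T))) ∧
  W2ContOn α T ∧
  ∃ γ : ℝ → Measure (Rd d × Rd d),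
    (∀ᵐ t ∂(volume.restrict (Icc (0:ℝ) T)),
      IsCoupling (γ t) (α t) μ0 ∧ entCost ε (α t) μ0 (γ t) = OTeps ε (α t) μ0) ∧
    SGWeakForm A T α0 α γ

/-- Weak solution of the (unregularized) semi-geostrophic type system:
the plans `γ_t` are optimal for `W₂²(α_t, μ₀)` for a.e. `t`. -/
def IsSGSol {d : ℕ} (A : Rd d →L[ℝ] Rd d) (T R0 : ℝ)
    (α0 μ0 : Measure (Rd d)) (α : ℝ → Measure (Rd d)) : Prop :=
  α 0 = α0 ∧
  (∀ t ∈ Icc (0:ℝ) T, ProbOn (α t) (2 * R0 * Real.exp (‖A‖ * T))) ∧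
  W2ContOn α T ∧
  ∃ γ : ℝ → Measure (Rd d × Rd d),
    (∀ᵐ t ∂(volume.restrict (Icc (0:ℝ) T)),
      IsCoupling (γ t) (α t) μ0 ∧ (∫ p, ‖p.1 - p.2‖ ^ 2 ∂(γ t)) = W2sq (α t) μ0) ∧
    SGWeakForm A T α0 α γ

/-- The distance `sup_{t ∈ [0,T]} e^{−λt} W₂(a_t, b_t)` on curves of measures. -/
def curveDist {d : ℕ} (lam T : ℝ) (a b : ℝ → Measure (Rd d)) : ℝ :=
  sSup {c | ∃ t ∈ Icc (0:ℝ) T, c = Real.exp (-lam * t) * W2 (a t) (b t)}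

/-- Membership in `E_T = C([0,T], (P(B_R), W₂))`. -/
def InE {d : ℕ} (T R : ℝ) (a : ℝ → Measure (Rd d)) : Prop :=
  (∀ t ∈ Icc (0:ℝ) T, ProbOn (a t) R) ∧ W2ContOn a T

/-!
(H1) and Gronwall's lemma keep every flow started in `B_{R₀}` inside `B_{R_T}`, where (H2) and
(H3) apply. For two curves with `W₂(a₁ t, a₂ t) ≤ e^{λ t} D` they give
`‖(X¹ - X²)'‖ ≤ K ‖X¹ - X²‖ + M e^{λ t} D`, so `‖X¹_t - X²_t‖ ≤ (2/5) e^{λ t} D` because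
`λ - K = 5M/2`. Coupling `α₀` with itself through `(X¹_t, X²_t)` bounds `W₂` of the
push-forwards by the same quantity: `Φ` contracts by `2/5 ≤ 1/2`. Instead of invoking the
completeness of `(P(B_R), W₂)`, the fixed point is obtained by Picard iteration on the flow maps,
which converge pointwise at a geometric rate. Uniqueness follows from the contraction, since
`W₂(μ, ν) = 0` forces `μ = ν`.
-/

open scoped Topology

section Wasserstein

variable {d : ℕ} {α β : Measure (Rd d)} {γ : Measure (Rd d × Rd d)} {R : ℝ}

lemma SuppIn.ae_mem (h : SuppIn α R) : ∀ᵐ x ∂α, x ∈ closedBall (0 : Rd d) R :=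
  ae_iff.2 h

lemma SuppIn.mono (h : SuppIn α R) {R' : ℝ} (hR : R ≤ R') : SuppIn α R' :=
  measure_mono_null (compl_subset_compl.2 (closedBall_subset_closedBall hR)) h

lemma ProbOn.nonneg (h : ProbOn α R) : 0 ≤ R := by
  by_contra hR
  have h0 := h.2
  rw [SuppIn, closedBall_eq_empty.2 (not_le.1 hR), compl_empty,
    Measure.measure_univ_eq_zero] at h0
  have := h.1
  exact IsProbabilityMeasure.ne_zero α h0

lemma W2_nonneg : 0 ≤ W2 α β := Real.sqrt_nonneg _

lemma IsCoupling.isProbabilityMeasure (h : IsCoupling γ α β) [IsProbabilityMeasure α] :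
    IsProbabilityMeasure γ :=
  ⟨by rw [← preimage_univ (f := Prod.fst), ← Measure.map_apply measurable_fst .univ, h.1,
    measure_univ]⟩

lemma isCoupling_prod [IsProbabilityMeasure α] [IsProbabilityMeasure β] :
    IsCoupling (α.prod β) α β :=
  ⟨by simp, by simp⟩

lemma IsCoupling.ae_norm_sub_le (h : IsCoupling γ α β) (hα : SuppIn α R) (hβ : SuppIn β R) :
    ∀ᵐ p ∂γ, ‖p.1 - p.2‖ ≤ 2 * R := by
  have h₁ := ae_of_ae_map measurable_fst.aemeasurable (h.1 ▸ hα.ae_mem)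
  have h₂ := ae_of_ae_map measurable_snd.aemeasurable (h.2 ▸ hβ.ae_mem)
  filter_upwards [h₁, h₂] with p hp₁ hp₂
  rw [mem_closedBall_zero_iff] at hp₁ hp₂
  linarith [norm_sub_le p.1 p.2]

lemma W2sq_le_integral (h : IsCoupling γ α β) : W2sq α β ≤ ∫ p, ‖p.1 - p.2‖ ^ 2 ∂γ :=
  csInf_le ⟨0, by rintro _ ⟨_, -, rfl⟩; positivity⟩ ⟨γ, h, rfl⟩

lemma W2_le_of_isCoupling [IsProbabilityMeasure γ] (h : IsCoupling γ α β) {c : ℝ} (hc : 0 ≤ c)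
    (hγ : ∀ᵐ p ∂γ, ‖p.1 - p.2‖ ≤ c) : W2 α β ≤ c := by
  refine Real.sqrt_le_iff.2 ⟨hc, (W2sq_le_integral h).trans ?_⟩
  calc ∫ p, ‖p.1 - p.2‖ ^ 2 ∂γ ≤ ∫ _, c ^ 2 ∂γ :=
        integral_mono_of_nonneg (ae_of_all _ fun _ => by positivity) (integrable_const _)
          (hγ.mono fun _ hp => pow_le_pow_left₀ (norm_nonneg _) hp 2)
    _ = c ^ 2 := by simp

lemma W2_le_two_mul (hα : ProbOn α R) (hβ : ProbOn β R) : W2 α β ≤ 2 * R := by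
  have := hα.1; have := hβ.1
  exact W2_le_of_isCoupling isCoupling_prod (by linarith [hα.nonneg])
    (isCoupling_prod.ae_norm_sub_le hα.2 hβ.2)

/-- The synchronous coupling `x ↦ (f x, g x)`. -/
lemma W2_map_le [IsProbabilityMeasure α] {f g : Rd d → Rd d} (hf : AEMeasurable f α)
    (hg : AEMeasurable g α) {c : ℝ} (hc : 0 ≤ c) (h : ∀ᵐ x ∂α, ‖f x - g x‖ ≤ c) :
    W2 (α.map f) (α.map g) ≤ c := by
  have hfg : AEMeasurable (fun x => (f x, g x)) α := hf.prodMk hg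
  have := Measure.isProbabilityMeasure_map (μ := α) hfg
  refine W2_le_of_isCoupling (γ := α.map fun x => (f x, g x))
    ⟨?_, ?_⟩ hc ((ae_map_iff hfg (measurableSet_le (by fun_prop) measurable_const)).2 h)
  · rw [AEMeasurable.map_map_of_aemeasurable measurable_fst.aemeasurable hfg]; rfl
  · rw [AEMeasurable.map_map_of_aemeasurable measurable_snd.aemeasurable hfg]; rfl

lemma W2_self [IsProbabilityMeasure α] : W2 α α = 0 :=
  le_antisymm (by simpa using W2_map_le aemeasurable_id aemeasurable_id le_rfl (by simp))
    W2_nonneg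

lemma IsCoupling.measure_le_thickening_add (h : IsCoupling γ α β) {B : Set (Rd d)}
    (hB : MeasurableSet B) (r : ℝ) :
    α B ≤ β (thickening r B) + γ {p | r ≤ ‖p.1 - p.2‖} := by
  rw [← h.1, ← h.2, Measure.map_apply measurable_fst hB,
    Measure.map_apply measurable_snd isOpen_thickening.measurableSet]
  refine (measure_mono fun p hp => ?_).trans (measure_union_le _ _)
  by_cases hr : r ≤ ‖p.1 - p.2‖
  · exact Or.inr hr
  · exact Or.inl (mem_thickening_iff.2 ⟨p.1, hp, by rw [dist_eq_norm, norm_sub_rev]; linarith⟩)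

lemma IsCoupling.measureReal_le_integral_div (h : IsCoupling γ α β) [IsProbabilityMeasure γ]
    (hα : SuppIn α R) (hβ : SuppIn β R) {r : ℝ} (hr : 0 < r) :
    γ.real {p | r ≤ ‖p.1 - p.2‖} ≤ (∫ p, ‖p.1 - p.2‖ ^ 2 ∂γ) / r ^ 2 := by
  have hint : Integrable (fun p : Rd d × Rd d => ‖p.1 - p.2‖ ^ 2) γ :=
    .of_bound (by fun_prop) ((2 * R) ^ 2) <| (h.ae_norm_sub_le hα hβ).mono fun p hp => by
      rw [Real.norm_eq_abs, abs_of_nonneg (by positivity)]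
      exact pow_le_pow_left₀ (norm_nonneg _) hp 2
  rw [le_div_iff₀ (by positivity), mul_comm]
  refine le_trans ?_
    (mul_meas_ge_le_integral_of_nonneg (ae_of_all _ fun _ => by positivity) hint (r ^ 2))
  exact mul_le_mul_of_nonneg_left
    (measureReal_mono (fun p hp => pow_le_pow_left₀ hr.le hp 2) (measure_ne_top _ _))
    (by positivity)

lemma exists_isCoupling_integral_lt [IsProbabilityMeasure α] [IsProbabilityMeasure β]
    (h : W2 α β = 0) {c : ℝ} (hc : 0 < c) :
    ∃ γ, IsCoupling γ α β ∧ ∫ p, ‖p.1 - p.2‖ ^ 2 ∂γ < c := by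
  have hlt : W2sq α β < c := (Real.sqrt_eq_zero'.1 h).trans_lt hc
  obtain ⟨_, ⟨γ, hγ, rfl⟩, hlt⟩ :=
    exists_lt_of_csInf_lt (by exact ⟨_, α.prod β, isCoupling_prod, rfl⟩) hlt
  exact ⟨γ, hγ, hlt⟩

/-- `W₂ = 0` forces the Lévy–Prokhorov distance to vanish: by Chebyshev, a coupling of cost
`< r³` moves mass `< r` by more than `r`. -/
lemma eq_of_W2_eq_zero (hα : ProbOn α R) (hβ : ProbOn β R) (h : W2 α β = 0) : α = β := by
  have := hα.1; have := hβ.1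
  have hLP : levyProkhorovEDist α β = 0 := by
    refine nonpos_iff_eq_zero.1 (levyProkhorovEDist_le_of_forall_le α β 0 fun ε B hε hε' hB => ?_)
    have hr : 0 < ε.toReal := ENNReal.toReal_pos hε.ne' hε'.ne
    obtain ⟨γ, hγ, hcost⟩ := exists_isCoupling_integral_lt h (pow_pos hr 3)
    have := hγ.isProbabilityMeasure
    refine (hγ.measure_le_thickening_add hB _).trans (add_le_add le_rfl ?_)
    rw [← ENNReal.toReal_le_toReal (measure_ne_top _ _) hε'.ne]
    refine (hγ.measureReal_le_integral_div hα.2 hβ.2 hr).trans ?_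
    rw [div_le_iff₀ (by positivity)]
    linarith
  refine ext_of_generate_finite _ ?_ isPiSystem_isClosed (fun s hs =>
    measure_eq_measure_of_levyProkhorovEDist_eq_zero_of_isClosed hLP hs
      ⟨1, one_pos, measure_ne_top _ _⟩ ⟨1, one_pos, measure_ne_top _ _⟩) (by simp)
  rw [BorelSpace.measurable_eq (α := Rd d), borel_eq_generateFrom_isClosed]

end Wasserstein

section CurveSpace

variable {d : ℕ} {T R lam : ℝ} {a b : ℝ → Measure (Rd d)} {α0 : Measure (Rd d)}

lemma InE.isCptProb (ha : InE T R a) : ∀ t ∈ Icc 0 T, IsCptProb (a t) :=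
  fun t ht => ⟨(ha.1 t ht).1, R, (ha.1 t ht).2⟩

lemma inE_const (hα : ProbOn α0 R) : InE T R fun _ => α0 := by
  have := hα.1
  exact ⟨fun _ _ => hα, fun _ _ δ hδ => ⟨1, one_pos, fun _ _ _ => by rwa [W2_self]⟩⟩

lemma inE_map [IsProbabilityMeasure α0] {F : ℝ → Rd d → Rd d} {L : ℝ} (hL : 0 ≤ L)
    (hF : ∀ t ∈ Icc 0 T, AEMeasurable (F t) α0)
    (hR : ∀ t ∈ Icc 0 T, ∀ᵐ z ∂α0, F t z ∈ closedBall 0 R)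
    (hFL : ∀ s ∈ Icc 0 T, ∀ t ∈ Icc 0 T, ∀ᵐ z ∂α0, ‖F s z - F t z‖ ≤ L * |s - t|) :
    InE T R fun t => α0.map (F t) := by
  refine ⟨fun t ht => ⟨Measure.isProbabilityMeasure_map (hF t ht), ?_⟩, fun t ht δ hδ => ?_⟩
  · rw [SuppIn, Measure.map_apply_of_aemeasurable (hF t ht) measurableSet_closedBall.compl]
    exact ae_iff.1 (hR t ht)
  · refine ⟨δ / (L + 1), by positivity, fun s hs hst => ?_⟩
    calc W2 (α0.map (F s)) (α0.map (F t)) ≤ L * |s - t| :=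
          W2_map_le (hF s hs) (hF t ht) (by positivity) (hFL s hs t ht)
      _ ≤ L * (δ / (L + 1)) := by gcongr
      _ < δ := by
          rw [mul_div_assoc', div_lt_iff₀ (by positivity)]
          nlinarith

lemma curveDist_nonneg : 0 ≤ curveDist lam T a b :=
  Real.sSup_nonneg <| by rintro _ ⟨t, -, rfl⟩; exact mul_nonneg (exp_pos _).le W2_nonneg

lemma curveDist_congr {a' b' : ℝ → Measure (Rd d)} (ha : ∀ t ∈ Icc 0 T, a t = a' t)
    (hb : ∀ t ∈ Icc 0 T, b t = b' t) : curveDist lam T a b = curveDist lam T a' b' := by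
  simp only [curveDist]
  congr 1
  ext c
  exact exists_congr fun t => and_congr_right fun ht => by rw [ha t ht, hb t ht]

lemma curveDist_le {c : ℝ} (hc : 0 ≤ c)
    (h : ∀ t ∈ Icc 0 T, exp (-lam * t) * W2 (a t) (b t) ≤ c) : curveDist lam T a b ≤ c :=
  Real.sSup_le (by rintro _ ⟨t, ht, rfl⟩; exact h t ht) hc

lemma W2_le_exp_mul_curveDist (hlam : 0 ≤ lam) (ha : ∀ t ∈ Icc 0 T, ProbOn (a t) R)
    (hb : ∀ t ∈ Icc 0 T, ProbOn (b t) R) {t : ℝ} (ht : t ∈ Icc 0 T) :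
    W2 (a t) (b t) ≤ exp (lam * t) * curveDist lam T a b := by
  have hbdd : BddAbove {c | ∃ t ∈ Icc 0 T, c = exp (-lam * t) * W2 (a t) (b t)} := by
    refine ⟨2 * R, ?_⟩
    rintro _ ⟨s, hs, rfl⟩
    calc exp (-lam * s) * W2 (a s) (b s) ≤ 1 * W2 (a s) (b s) :=
          mul_le_mul_of_nonneg_right (Real.exp_le_one_iff.2 (by nlinarith [hs.1])) W2_nonneg
      _ ≤ 2 * R := by rw [one_mul]; exact W2_le_two_mul (ha s hs) (hb s hs)
  have h := le_csSup hbdd ⟨t, ht, rfl⟩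
  rwa [neg_mul, exp_neg, inv_mul_le_iff₀ (exp_pos _)] at h

lemma curveDist_map_le [IsProbabilityMeasure α0] {F G : ℝ → Rd d → Rd d} {c : ℝ} (hc : 0 ≤ c)
    (hF : ∀ t ∈ Icc 0 T, AEMeasurable (F t) α0) (hG : ∀ t ∈ Icc 0 T, AEMeasurable (G t) α0)
    (h : ∀ t ∈ Icc 0 T, ∀ᵐ z ∂α0, ‖F t z - G t z‖ ≤ exp (lam * t) * c) :
    curveDist lam T (fun t => α0.map (F t)) (fun t => α0.map (G t)) ≤ c := by
  refine curveDist_le hc fun t ht => ?_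
  rw [neg_mul, exp_neg, inv_mul_le_iff₀ (exp_pos _)]
  exact W2_map_le (hF t ht) (hG t ht) (by positivity) (h t ht)

lemma eq_of_curveDist_le_mul (hlam : 0 ≤ lam) (ha : ∀ t ∈ Icc 0 T, ProbOn (a t) R)
    (hb : ∀ t ∈ Icc 0 T, ProbOn (b t) R) {k : ℝ} (hk : k < 1)
    (h : curveDist lam T a b ≤ k * curveDist lam T a b) {t : ℝ} (ht : t ∈ Icc 0 T) :
    a t = b t := by
  have hD : curveDist lam T a b = 0 := by
    nlinarith [curveDist_nonneg (lam := lam) (T := T) (a := a) (b := b)]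
  refine eq_of_W2_eq_zero (ha t ht) (hb t ht) (le_antisymm ?_ W2_nonneg)
  simpa [hD] using W2_le_exp_mul_curveDist hlam ha hb ht

end CurveSpace

/-- The bound solves `y' = K y + c (λ - K) e^{λ t}`, `y 0 = u`. -/
theorem norm_le_of_norm_deriv_le_exp {E : Type*} [NormedAddCommGroup E] [NormedSpace ℝ E]
    {f f' : ℝ → E} {T K lam c u : ℝ} (hf : ∀ t ∈ Icc 0 T, HasDerivAt f (f' t) t)
    (h0 : ‖f 0‖ ≤ u) (hf' : ∀ t ∈ Icc 0 T, ‖f' t‖ ≤ K * ‖f t‖ + c * (lam - K) * exp (lam * t))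
    {t : ℝ} (ht : t ∈ Icc 0 T) :
    ‖f t‖ ≤ exp (K * t) * u + c * (exp (lam * t) - exp (K * t)) := by
  have hexp (κ s : ℝ) : HasDerivAt (fun s => exp (κ * s)) (κ * exp (κ * s)) s := by
    simpa [mul_comm] using ((hasDerivAt_id s).const_mul κ).exp
  refine le_of_forall_pos_le_add fun ε hε => ?_
  -- perturb the barrier by `η e^{(K+1) s}` so that the comparison becomes strict
  set η := ε / exp ((K + 1) * t)
  have hη : 0 < η := by positivity
  have h := image_norm_le_of_norm_deriv_right_lt_deriv_boundary
    (B := fun s => exp (K * s) * u + c * (exp (lam * s) - exp (K * s)) + η * exp ((K + 1) * s))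
    (fun s hs => (hf s hs).continuousAt.continuousWithinAt)
    (fun s hs => (hf s (Ico_subset_Icc_self hs)).hasDerivWithinAt)
    (by simp; linarith)
    (fun s => (((hexp K s).mul_const u).add (((hexp lam s).sub (hexp K s)).const_mul c)).add
      ((hexp (K + 1) s).const_mul η))
    (fun s hs hfs => by
      have hs' := hf' s (Ico_subset_Icc_self hs)
      rw [hfs] at hs'
      nlinarith [mul_pos hη (exp_pos ((K + 1) * s))]) ht
  rwa [div_mul_cancel₀ _ (exp_pos _).ne'] at h

def IsFlow {d : ℕ} (B : Measure (Rd d) → Rd d → Rd d) (T : ℝ) (a : ℝ → Measure (Rd d))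
    (Xa : ℝ → Rd d → Rd d) : Prop :=
  ∀ x, Xa 0 x = x ∧ ∀ t ∈ Icc (0:ℝ) T, HasDerivAt (fun s => Xa s x) (B (a t) (Xa t x)) t

namespace IsFlow

variable {d : ℕ} {B : Measure (Rd d) → Rd d → Rd d} {T C R K M : ℝ} {a : ℝ → Measure (Rd d)}
  {Xa : ℝ → Rd d → Rd d}

/-- The linear growth bound `C (1 + |x|)` is the forcing `c (λ - K) e^{λ t}` with `K = C`,
`λ = 0`, `c = -1`. -/
lemma mem_closedBall (hX : IsFlow B T a Xa) (h1 : H1 B C) (hC : 0 ≤ C)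
    (ha : ∀ t ∈ Icc 0 T, IsCptProb (a t)) {R0 : ℝ} {x : Rd d} (hx : x ∈ closedBall 0 R0)
    {t : ℝ} (ht : t ∈ Icc 0 T) : Xa t x ∈ closedBall 0 ((R0 + 1) * exp (C * T)) := by
  rw [mem_closedBall_zero_iff] at hx ⊢
  have h := norm_le_of_norm_deriv_le_exp (K := C) (lam := 0) (c := -1) (u := R0) (hX x).2
    (by rwa [(hX x).1]) (fun s hs => by simpa [mul_add, add_comm] using h1 _ (ha s hs) (Xa s x)) ht
  have hCt : exp (C * t) ≤ exp (C * T) := exp_le_exp.2 (mul_le_mul_of_nonneg_left ht.2 hC)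
  have hR0 : 0 ≤ R0 + 1 := by linarith [norm_nonneg x]
  simp only [zero_mul, exp_zero] at h
  nlinarith [mul_le_mul_of_nonneg_left hCt hR0]

lemma norm_sub_le (hX : IsFlow B T a Xa) (h1 : H1 B C) (hC : 0 ≤ C)
    (ha : ∀ t ∈ Icc 0 T, IsCptProb (a t)) {x : Rd d}
    (hR : ∀ t ∈ Icc 0 T, Xa t x ∈ closedBall 0 R) {s t : ℝ} (hs : s ∈ Icc 0 T) (ht : t ∈ Icc 0 T) :
    ‖Xa s x - Xa t x‖ ≤ C * (1 + R) * |s - t| := by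
  simpa [Real.norm_eq_abs] using (convex_Icc 0 T).norm_image_sub_le_of_norm_hasDerivWithin_le
    (fun r hr => ((hX x).2 r hr).hasDerivWithinAt)
    (fun r hr => (h1 _ (ha r hr) _).trans (by gcongr; exact mem_closedBall_zero_iff.1 (hR r hr)))
    ht hs

/-- (H2) and (H3) give `‖(X₁ - X₂)'‖ ≤ K ‖X₁ - X₂‖ + M W₂(a₁, a₂)`, and `M = (2/5) (λ - K)`. -/
lemma norm_sub_le_of_W2_le {a₁ a₂ : ℝ → Measure (Rd d)} {X₁ X₂ : ℝ → Rd d → Rd d}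
    (hX₁ : IsFlow B T a₁ X₁) (hX₂ : IsFlow B T a₂ X₂) (h2 : LipOnBall B R K)
    (h3 : W2LipOnBall B R M) (hM : 0 ≤ M) (ha₁ : ∀ t ∈ Icc 0 T, ProbOn (a₁ t) R)
    (ha₂ : ∀ t ∈ Icc 0 T, ProbOn (a₂ t) R) {x y : Rd d}
    (hx : ∀ t ∈ Icc 0 T, X₁ t x ∈ closedBall 0 R) (hy : ∀ t ∈ Icc 0 T, X₂ t y ∈ closedBall 0 R)
    {D : ℝ} (hD : ∀ t ∈ Icc 0 T, W2 (a₁ t) (a₂ t) ≤ exp ((5 * M / 2 + K) * t) * D)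
    {t : ℝ} (ht : t ∈ Icc 0 T) :
    ‖X₁ t x - X₂ t y‖ ≤
      exp (K * t) * ‖x - y‖ + 2 / 5 * D * (exp ((5 * M / 2 + K) * t) - exp (K * t)) := by
  refine norm_le_of_norm_deriv_le_exp (f := fun s => X₁ s x - X₂ s y)
    (fun s hs => ((hX₁ x).2 s hs).sub ((hX₂ y).2 s hs)) (by simp [(hX₁ x).1, (hX₂ y).1])
    (fun s hs => ?_) ht
  calc ‖B (a₁ s) (X₁ s x) - B (a₂ s) (X₂ s y)‖
      ≤ ‖B (a₁ s) (X₁ s x) - B (a₁ s) (X₂ s y)‖ + ‖B (a₁ s) (X₂ s y) - B (a₂ s) (X₂ s y)‖ :=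
        norm_sub_le_norm_sub_add_norm_sub _ _ _
    _ ≤ K * ‖X₁ s x - X₂ s y‖ + M * (exp ((5 * M / 2 + K) * s) * D) :=
        add_le_add (h2 _ (ha₁ s hs) _ (hx s hs) _ (hy s hs))
          ((h3 _ _ (ha₁ s hs) (ha₂ s hs) _ (hy s hs)).trans
            (mul_le_mul_of_nonneg_left (hD s hs) hM))
    _ = _ := by ring

lemma aemeasurable (hX : IsFlow B T a Xa) (h2 : LipOnBall B R K) (h3 : W2LipOnBall B R M)
    (hM : 0 ≤ M) (ha : ∀ t ∈ Icc 0 T, ProbOn (a t) R) {R0 : ℝ}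
    (hR : ∀ t ∈ Icc 0 T, ∀ x ∈ closedBall 0 R0, Xa t x ∈ closedBall 0 R) {α0 : Measure (Rd d)}
    (hα0 : SuppIn α0 R0) {t : ℝ} (ht : t ∈ Icc 0 T) : AEMeasurable (Xa t) α0 := by
  have hlip : LipschitzOnWith (Real.toNNReal (exp (K * t))) (Xa t) (closedBall 0 R0) := by
    refine .of_dist_le_mul fun x hx y hy => ?_
    rw [dist_eq_norm, dist_eq_norm, Real.coe_toNNReal _ (exp_pos _).le]
    simpa using hX.norm_sub_le_of_W2_le hX h2 h3 hM ha ha (hR · · x hx) (hR · · y hy) (D := 0)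
      (fun s hs => by have := (ha s hs).1; simp [W2_self]) ht
  rw [← Measure.restrict_eq_self_of_ae_mem hα0.ae_mem]
  exact hlip.continuousOn.aemeasurable measurableSet_closedBall

lemma norm_sub_le_curveDist {a₁ a₂ : ℝ → Measure (Rd d)} {X₁ X₂ : ℝ → Rd d → Rd d}
    (hX₁ : IsFlow B T a₁ X₁) (hX₂ : IsFlow B T a₂ X₂) (h2 : LipOnBall B R K)
    (h3 : W2LipOnBall B R M) (hK : 0 ≤ K) (hM : 0 ≤ M) (ha₁ : ∀ t ∈ Icc 0 T, ProbOn (a₁ t) R)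
    (ha₂ : ∀ t ∈ Icc 0 T, ProbOn (a₂ t) R) {x : Rd d}
    (hx₁ : ∀ t ∈ Icc 0 T, X₁ t x ∈ closedBall 0 R) (hx₂ : ∀ t ∈ Icc 0 T, X₂ t x ∈ closedBall 0 R)
    {t : ℝ} (ht : t ∈ Icc 0 T) :
    ‖X₁ t x - X₂ t x‖ ≤
      exp ((5 * M / 2 + K) * t) * (2 / 5 * curveDist (5 * M / 2 + K) T a₁ a₂) := by
  have h := hX₁.norm_sub_le_of_W2_le hX₂ h2 h3 hM ha₁ ha₂ hx₁ hx₂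
    (fun s hs => W2_le_exp_mul_curveDist (by positivity) ha₁ ha₂ hs) ht
  have hD : 0 ≤ curveDist (5 * M / 2 + K) T a₁ a₂ := curveDist_nonneg
  simp only [sub_self, norm_zero, mul_zero, zero_add] at h
  nlinarith [exp_pos (K * t)]

end IsFlow

lemma iterate_le_geometric {ι : Type*} {f : ι → ι} {P : ι → Prop} {δ : ι → ι → ℝ} {k : ℝ}
    (hk : 0 ≤ k) (hP : ∀ a, P a → P (f a)) (hf : ∀ a b, P a → P b → δ (f a) (f b) ≤ k * δ a b)
    {a : ι} (ha : P a) (n : ℕ) : δ (f^[n] a) (f^[n + 1] a) ≤ k ^ n * δ a (f a) := by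
  induction n with
  | zero => simp
  | succ n ih =>
    rw [Function.iterate_succ_apply', Function.iterate_succ_apply' f (n + 1)]
    calc δ (f (f^[n] a)) (f (f^[n + 1] a)) ≤ k * δ (f^[n] a) (f^[n + 1] a) :=
          hf _ _ (Function.Iterate.rec P ha hP n) (Function.Iterate.rec P ha hP (n + 1))
      _ ≤ k * (k ^ n * δ a (f a)) := by gcongr
      _ = k ^ (n + 1) * δ a (f a) := by ring

lemma eq_of_forall_dist_le_mul_pow {E : Type*} [MetricSpace E] {x y : E} {c k : ℝ}
    (hk₀ : 0 ≤ k) (hk : k < 1) (h : ∀ n : ℕ, dist x y ≤ c * k ^ n) : x = y :=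
  dist_le_zero.1 <| ge_of_tendsto'
    (by simpa using (tendsto_pow_atTop_nhds_zero_of_lt_one hk₀ hk).const_mul c) h

section FixedPoint

variable {d : ℕ} {α0 : Measure (Rd d)} [IsProbabilityMeasure α0] {T R L : ℝ}

lemma exists_limit_of_dist_le_geometric {F : ℕ → ℝ → Rd d → Rd d} {Q k : ℝ} (hL : 0 ≤ L)
    (hk : k < 1) (hF : ∀ n, ∀ t ∈ Icc 0 T, AEMeasurable (F n t) α0)
    (hR : ∀ n, ∀ t ∈ Icc 0 T, ∀ᵐ z ∂α0, F n t z ∈ closedBall 0 R)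
    (hFL : ∀ n, ∀ s ∈ Icc 0 T, ∀ t ∈ Icc 0 T, ∀ᵐ z ∂α0, ‖F n s z - F n t z‖ ≤ L * |s - t|)
    (hstep : ∀ n, ∀ t ∈ Icc 0 T, ∀ᵐ z ∂α0, dist (F n t z) (F (n + 1) t z) ≤ Q * k ^ n) :
    ∃ G : ℝ → Rd d → Rd d, (∀ t ∈ Icc 0 T, AEMeasurable (G t) α0) ∧
      InE T R (fun t => α0.map (G t)) ∧
      ∀ t ∈ Icc 0 T, ∀ᵐ z ∂α0, ∀ n, dist (F n t z) (G t z) ≤ Q * k ^ n / (1 - k) := by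
  set G : ℝ → Rd d → Rd d := fun t z => limUnder atTop fun n => F n t z
  have hG : ∀ t ∈ Icc 0 T, ∀ᵐ z ∂α0, Tendsto (fun n => F n t z) atTop (𝓝 (G t z)) :=
    fun t ht => (ae_all_iff.2 fun n => hstep n t ht).mono fun z hz =>
      (cauchySeq_of_le_geometric k Q hk hz).tendsto_limUnder
  have hGm : ∀ t ∈ Icc 0 T, AEMeasurable (G t) α0 :=
    fun t ht => aemeasurable_of_tendsto_metrizable_ae' (fun n => hF n t ht) (hG t ht)
  refine ⟨G, hGm, inE_map hL hGm (fun t ht => ?_) (fun s hs t ht => ?_), fun t ht => ?_⟩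
  · filter_upwards [hG t ht, ae_all_iff.2 fun n => hR n t ht] with z hz hRz
    exact isClosed_closedBall.mem_of_tendsto hz (.of_forall hRz)
  · filter_upwards [hG s hs, hG t ht, ae_all_iff.2 fun n => hFL n s hs t ht] with z hzs hzt hz
    exact le_of_tendsto' (hzs.sub hzt).norm hz
  · filter_upwards [hG t ht, ae_all_iff.2 fun n => hstep n t ht] with z hz hzn
    exact dist_le_of_le_geometric_of_tendsto k Q hk hzn hz

/-- Picard iteration for `Φ a = (X a)_# α0`, run pointwise on the flow maps: this sidesteps
the completeness of `(P(B_R), W₂)`. -/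
theorem exists_map_flow_eq {X : (ℝ → Measure (Rd d)) → ℝ → Rd d → Rd d} {lam k : ℝ}
    {a₀ : ℝ → Measure (Rd d)} (ha₀ : InE T R a₀) (hL : 0 ≤ L) (hlam : 0 ≤ lam) (hk₀ : 0 ≤ k)
    (hk : k < 1) (hmeas : ∀ a, InE T R a → ∀ t ∈ Icc 0 T, AEMeasurable (X a t) α0)
    (hR : ∀ a, InE T R a → ∀ t ∈ Icc 0 T, ∀ᵐ z ∂α0, X a t z ∈ closedBall 0 R)
    (hXL : ∀ a, InE T R a → ∀ s ∈ Icc 0 T, ∀ t ∈ Icc 0 T, ∀ᵐ z ∂α0,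
      ‖X a s z - X a t z‖ ≤ L * |s - t|)
    (hdiff : ∀ a b, InE T R a → InE T R b → ∀ t ∈ Icc 0 T, ∀ᵐ z ∂α0,
      ‖X a t z - X b t z‖ ≤ exp (lam * t) * (k * curveDist lam T a b)) :
    ∃ a, InE T R a ∧ ∀ t ∈ Icc 0 T, α0.map (X a t) = a t := by
  set Φ : (ℝ → Measure (Rd d)) → ℝ → Measure (Rd d) := fun a t => α0.map (X a t)
  have hΦ : ∀ a, InE T R a → InE T R (Φ a) :=
    fun a ha => inE_map hL (hmeas a ha) (hR a ha) (hXL a ha)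
  have hseq : ∀ n, InE T R (Φ^[n] a₀) := Function.Iterate.rec _ ha₀ hΦ
  have hgeo := iterate_le_geometric hk₀ hΦ (fun a b ha hb => curveDist_map_le
    (mul_nonneg hk₀ curveDist_nonneg) (hmeas a ha) (hmeas b hb) (hdiff a b ha hb)) ha₀
  set Q := exp (lam * T) * k * curveDist lam T a₀ (Φ a₀)
  have hstep : ∀ n, ∀ t ∈ Icc 0 T, ∀ᵐ z ∂α0,
      dist (X (Φ^[n] a₀) t z) (X (Φ^[n + 1] a₀) t z) ≤ Q * k ^ n := fun n t ht => by
    filter_upwards [hdiff _ _ (hseq n) (hseq (n + 1)) t ht] with z hz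
    rw [dist_eq_norm]
    refine hz.trans ?_
    calc exp (lam * t) * (k * curveDist lam T (Φ^[n] a₀) (Φ^[n + 1] a₀))
        ≤ exp (lam * T) * (k * (k ^ n * curveDist lam T a₀ (Φ a₀))) := by
          gcongr
          · exact mul_nonneg hk₀ curveDist_nonneg
          · exact ht.2
          · exact hgeo n
      _ = Q * k ^ n := by ring
  obtain ⟨G, hGm, hGE, hG⟩ := exists_limit_of_dist_le_geometric (F := fun n => X (Φ^[n] a₀))
    hL hk (fun n => hmeas _ (hseq n)) (fun n => hR _ (hseq n)) (fun n => hXL _ (hseq n)) hstep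
  have hQ : 0 ≤ Q := mul_nonneg (mul_nonneg (exp_pos _).le hk₀) curveDist_nonneg
  have hQn : ∀ n, 0 ≤ Q * k ^ n / (1 - k) :=
    fun n => div_nonneg (mul_nonneg hQ (pow_nonneg hk₀ n)) (by linarith)
  set a := fun t => α0.map (G t)
  have hclose : ∀ n, curveDist lam T a (Φ^[n + 1] a₀) ≤ Q * k ^ n / (1 - k) := fun n => by
    rw [Function.iterate_succ_apply']
    refine curveDist_map_le (hQn n) hGm (hmeas _ (hseq n)) fun t ht => ?_
    filter_upwards [hG t ht] with z hz
    rw [← dist_eq_norm, dist_comm]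
    exact (hz n).trans (le_mul_of_one_le_left (hQn n) (one_le_exp (by nlinarith [ht.1])))
  refine ⟨a, hGE, fun t ht => Measure.map_congr ?_⟩
  filter_upwards [hG t ht, ae_all_iff.2 fun n => hdiff a _ hGE (hseq (n + 1)) t ht]
    with z hz hzn
  refine eq_of_forall_dist_le_mul_pow (c := (exp (lam * t) + 1) * (Q * k / (1 - k))) hk₀ hk
    fun n => ?_
  calc dist (X a t z) (G t z)
      ≤ dist (X a t z) (X (Φ^[n + 1] a₀) t z) + dist (X (Φ^[n + 1] a₀) t z) (G t z) :=
        dist_triangle _ _ _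
    _ ≤ exp (lam * t) * (k * (Q * k ^ n / (1 - k))) + Q * k ^ (n + 1) / (1 - k) := by
        gcongr
        · rw [dist_eq_norm]
          exact (hzn n).trans (by gcongr; exact hclose n)
        · exact hz (n + 1)
    _ = (exp (lam * t) + 1) * (Q * k / (1 - k)) * k ^ n := by ring

end FixedPoint

theorem stmt3_general {d : ℕ} (B : Measure (Rd d) → Rd d → Rd d) (C R0 T K M : ℝ)
    (hC : 0 < C) (hT : 0 < T) (hK : 0 ≤ K) (hM : 0 ≤ M)
    (h1 : H1 B C)
    (h2 : LipOnBall B ((R0 + 1) * Real.exp (C * T)) K)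
    (h3 : W2LipOnBall B ((R0 + 1) * Real.exp (C * T)) M)
    (α0 : Measure (Rd d)) (hα0 : ProbOn α0 R0)
    (X : (ℝ → Measure (Rd d)) → ℝ → Rd d → Rd d)
    (hX : ∀ a : ℝ → Measure (Rd d), InE T ((R0 + 1) * Real.exp (C * T)) a → ∀ x,
      X a 0 x = x ∧ ∀ t ∈ Icc (0:ℝ) T,
        HasDerivAt (fun s => X a s x) (B (a t) (X a t x)) t) :
    (∀ a₁ a₂ : ℝ → Measure (Rd d),
      InE T ((R0 + 1) * Real.exp (C * T)) a₁ → InE T ((R0 + 1) * Real.exp (C * T)) a₂ →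
      curveDist (5 * M / 2 + K) T (fun t => α0.map (X a₁ t)) (fun t => α0.map (X a₂ t))
        ≤ (1 / 2) * curveDist (5 * M / 2 + K) T a₁ a₂) ∧
    ∃ a : ℝ → Measure (Rd d), InE T ((R0 + 1) * Real.exp (C * T)) a ∧
      (∀ t ∈ Icc (0:ℝ) T, α0.map (X a t) = a t) ∧
      ∀ b : ℝ → Measure (Rd d), InE T ((R0 + 1) * Real.exp (C * T)) b →
        (∀ t ∈ Icc (0:ℝ) T, α0.map (X b t) = b t) →
        ∀ t ∈ Icc (0:ℝ) T, b t = a t := by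
  set R := (R0 + 1) * exp (C * T)
  set lam := 5 * M / 2 + K
  have := hα0.1
  have hR0R : R0 ≤ R := by
    have := hα0.nonneg
    calc R0 ≤ R0 + 1 := by linarith
      _ ≤ R := le_mul_of_one_le_right (by linarith) (one_le_exp (by positivity))
  have hflow : ∀ a, InE T R a → IsFlow B T a (X a) := hX
  have hball : ∀ a, InE T R a → ∀ t ∈ Icc 0 T, ∀ x ∈ closedBall (0 : Rd d) R0,
      X a t x ∈ closedBall 0 R :=
    fun a ha t ht x hx => (hflow a ha).mem_closedBall h1 hC.le ha.isCptProb hx ht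
  have hmeas : ∀ a, InE T R a → ∀ t ∈ Icc 0 T, AEMeasurable (X a t) α0 :=
    fun a ha t ht => (hflow a ha).aemeasurable h2 h3 hM ha.1 (hball a ha) hα0.2 ht
  have hXL : ∀ a, InE T R a → ∀ s ∈ Icc 0 T, ∀ t ∈ Icc 0 T, ∀ᵐ z ∂α0,
      ‖X a s z - X a t z‖ ≤ C * (1 + R) * |s - t| := fun a ha s hs t ht =>
    hα0.2.ae_mem.mono fun z hz =>
      (hflow a ha).norm_sub_le h1 hC.le ha.isCptProb (hball a ha · · z hz) hs ht
  have hdiff : ∀ a b, InE T R a → InE T R b → ∀ t ∈ Icc 0 T, ∀ᵐ z ∂α0,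
      ‖X a t z - X b t z‖ ≤ exp (lam * t) * (2 / 5 * curveDist lam T a b) :=
    fun a b ha hb t ht => hα0.2.ae_mem.mono fun z hz => (hflow a ha).norm_sub_le_curveDist
      (hflow b hb) h2 h3 hK hM ha.1 hb.1 (hball a ha · · z hz) (hball b hb · · z hz) ht
  have hcontr : ∀ a b, InE T R a → InE T R b → curveDist lam T (fun t => α0.map (X a t))
      (fun t => α0.map (X b t)) ≤ 2 / 5 * curveDist lam T a b := fun a b ha hb =>
    curveDist_map_le (mul_nonneg (by norm_num) curveDist_nonneg) (hmeas a ha) (hmeas b hb)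
      (hdiff a b ha hb)
  refine ⟨fun a b ha hb => (hcontr a b ha hb).trans
    (by linarith [curveDist_nonneg (lam := lam) (T := T) (a := a) (b := b)]), ?_⟩
  obtain ⟨a, ha, hfix⟩ := exists_map_flow_eq (inE_const ⟨hα0.1, hα0.2.mono hR0R⟩)
    (mul_nonneg hC.le (by linarith [hα0.nonneg])) (by positivity) (by norm_num) (by norm_num)
    hmeas (fun a ha t ht => hα0.2.ae_mem.mono (hball a ha t ht)) hXL hdiff
  exact ⟨a, ha, hfix, fun b hb hbfix t ht => eq_of_curveDist_le_mul (by positivity) hb.1 ha.1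
    (by norm_num : (2 / 5 : ℝ) < 1) (curveDist_congr hbfix hfix ▸ hcontr b a hb ha) ht⟩

/-- with `λ = 5M/2 + K`, the map `Φ_{α₀}(α)_t = (X_t^α)_# α₀` is
`½`-Lipschitz on `E_T` for the distance `sup_t e^{−λt} W₂`, and admits a unique fixed
point in `E_T`. -/
theorem stmt3 {d : ℕ} (B : Measure (Rd d) → Rd d → Rd d) (C R0 T K M : ℝ)
    (hC : 0 < C) (hR0 : 0 < R0) (hT : 0 < T) (hK : 0 ≤ K) (hM : 0 ≤ M)
    (h1 : H1 B C)
    (h2 : LipOnBall B ((R0 + 1) * Real.exp (C * T)) K)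
    (h3 : W2LipOnBall B ((R0 + 1) * Real.exp (C * T)) M)
    (α0 : Measure (Rd d)) (hα0 : ProbOn α0 R0)
    (X : (ℝ → Measure (Rd d)) → ℝ → Rd d → Rd d)
    (hX : ∀ a : ℝ → Measure (Rd d), InE T ((R0 + 1) * Real.exp (C * T)) a → ∀ x,
      X a 0 x = x ∧ ∀ t ∈ Icc (0:ℝ) T,
        HasDerivAt (fun s => X a s x) (B (a t) (X a t x)) t) :
    (∀ a₁ a₂ : ℝ → Measure (Rd d),
      InE T ((R0 + 1) * Real.exp (C * T)) a₁ → InE T ((R0 + 1) * Real.exp (C * T)) a₂ →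
      curveDist (5 * M / 2 + K) T (fun t => α0.map (X a₁ t)) (fun t => α0.map (X a₂ t))
        ≤ (1 / 2) * curveDist (5 * M / 2 + K) T a₁ a₂) ∧
    ∃ a : ℝ → Measure (Rd d), InE T ((R0 + 1) * Real.exp (C * T)) a ∧
      (∀ t ∈ Icc (0:ℝ) T, α0.map (X a t) = a t) ∧
      ∀ b : ℝ → Measure (Rd d), InE T ((R0 + 1) * Real.exp (C * T)) b →
        (∀ t ∈ Icc (0:ℝ) T, α0.map (X b t) = b t) →
        ∀ t ∈ Icc (0:ℝ) T, b t = a t :=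
  stmt3_general B C R0 T K M hC hT hK hM h1 h2 h3 α0 hα0 X hX
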